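/- (Structure of optimal transformations) Suppose a circuit C on V can be transformed into an AG-executable circuit using an initial mapping and exactly k inserted SWAP gates, and k is minimal. Then there exist s with 1 ≤ s ≤ k+1, a partition of C into s consecutive nonempty sections C₁,…,C_s, and permutations σ₁,…,σ_s on V such that σᵢ(Cᵢ) is an AG-circuit for every i and Σ_{i=2}^s ‖σᵢ ∘ σ_{i−1}⁻¹‖ = k. -/

import Mathlib

variable {V : Type*} [DecidableEq V]

/-- `L = [s₁,…,s_c]` is a list of swaps along edges of `G` implementing `π`,
i.e. each pair is an edge of `G` and `π = s_c ∘ ⋯ ∘ s₁`. -/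
def ImplementedBy (G : SimpleGraph V) (L : List (V × V)) (π : Equiv.Perm V) : Prop :=
  (∀ p ∈ L, G.Adj p.1 p.2) ∧ ((L.map fun p => Equiv.swap p.1 p.2).reverse).prod = π

/-- The swap cost of `π` on `G`: minimum number of edge-transpositions implementing `π`. -/
noncomputable def swapCost (G : SimpleGraph V) (π : Equiv.Perm V) : ℕ :=
  sInf {n | ∃ L : List (V × V), L.length = n ∧ ImplementedBy G L π}

inductive Gate (V : Type*) where
  | one : V → Gate V
  | two : V → V → Gate V

/-- A circuit is a finite list of 1- and 2-qubit gates. -/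
abbrev Circuit (V : Type*) := List (Gate V)

def permGate {V : Type*} (π : Equiv.Perm V) : Gate V → Gate V
  | .one q => .one (π q)
  | .two p q => .two (π p) (π q)

/-- The permuted circuit `π(C)`. -/
def permCircuit {V : Type*} (π : Equiv.Perm V) (C : Circuit V) : Circuit V :=
  C.map (permGate π)

/-- The interaction graph of a circuit. -/
def interactionGraph {V : Type*} (C : Circuit V) : SimpleGraph V where
  Adj p q := p ≠ q ∧ (Gate.two p q ∈ C ∨ Gate.two q p ∈ C)
  symm := ⟨fun p q h => ⟨h.1.symm, h.2.symm⟩⟩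
  loopless := ⟨fun p h => h.1 rfl⟩

/-- `C` is an `AG`-circuit: every 2-qubit gate acts on an edge of `AG`. -/
def IsAGCircuit {V : Type*} (AG : SimpleGraph V) (C : Circuit V) : Prop :=
  ∀ p q : V, Gate.two p q ∈ C → AG.Adj p q

/-- The (logical to physical) mapping current just after the swaps `S 0, …, S j` have been
applied, starting from initial mapping `τ`: each swap updates `σ` to `π_{i,j} ∘ σ`. -/
noncomputable def curMap (τ : Equiv.Perm V) (S : ℕ → List (V × V)) (j : ℕ) : Equiv.Perm V :=
  ((((List.range (j + 1)).flatMap S).map fun p => Equiv.swap p.1 p.2).reverse).prod * τ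

/-- A gate is executable under mapping `σ` on `AG`. -/
def GateExec {V : Type*} (AG : SimpleGraph V) (σ : Equiv.Perm V) : Gate V → Prop
  | .one _ => True
  | .two p q => AG.Adj (σ p) (σ q)

/-- `C` is transformed into an `AG`-executable circuit using initial mapping `τ` and,
for each gate position `j`, the SWAP gates `S j` (along edges of `AG`) inserted just
before gate `j`. -/
def ExecutableWith (AG : SimpleGraph V) (C : Circuit V) (τ : Equiv.Perm V)
    (S : ℕ → List (V × V)) : Prop :=
  (∀ j < C.length, ∀ p ∈ S j, AG.Adj p.1 p.2) ∧
  ∀ (j : ℕ) (h : j < C.length), GateExec AG (curMap τ S j) (C.get ⟨j, h⟩)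

/-- The number of SWAP gates inserted by the transformation. -/
def transSwapCount {V : Type*} (C : Circuit V) (S : ℕ → List (V × V)) : ℕ :=
  ∑ j ∈ Finset.range C.length, (S j).length

/-! In a minimal transformation every block of SWAPs must implement the permutation it effects
with the fewest possible edge-transpositions: a shorter implementation of the same permutation
leaves every current mapping unchanged and would lower the cost. Hence `k = ∑ⱼ ‖mⱼ ∘ mⱼ₋₁⁻¹‖` over the successive mappings `mⱼ`.
Cutting the circuit wherever the mapping changes yields sections executed under constant mappings;
unchanged steps cost nothing, and every change costs at least one SWAP, so there are at most
`k + 1` sections. -/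

open Finset

section Sections

variable {α : Type*} (n : ℕ) (m : ℕ → α)

/-- Every `j ≥ n` counts as a section start too: the set is then infinite, so `Nat.nth`
enumerates it strictly monotonically and reaches `n` at index `numSections n m`. -/
def IsSectionStart (j : ℕ) : Prop := j = 0 ∨ n ≤ j ∨ m j ≠ m (j - 1)

noncomputable def sectionStart (i : ℕ) : ℕ := Nat.nth (IsSectionStart n m) i

open Classical in
noncomputable def numSections : ℕ := Nat.count (IsSectionStart n m) n

lemma isSectionStart_infinite : (Set.ofPred (IsSectionStart n m)).Infinite :=
  Set.infinite_of_forall_exists_gt fun a =>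
    ⟨max a n + 1, Or.inr (Or.inl (by omega)), by omega⟩

lemma sectionStart_strictMono : StrictMono (sectionStart n m) :=
  Nat.nth_strictMono (isSectionStart_infinite n m)

lemma sectionStart_zero : sectionStart n m 0 = 0 :=
  Nat.nth_zero_of_zero (Or.inl rfl)

lemma sectionStart_numSections : sectionStart n m (numSections n m) = n := by
  classical
  exact Nat.nth_count (Or.inr (Or.inl le_rfl))

lemma count_isSectionStart_pos [DecidablePred (IsSectionStart n m)] {j : ℕ} (hj : 0 < j) :
    0 < Nat.count (IsSectionStart n m) j := by
  simpa using Nat.count_strict_mono (p := IsSectionStart n m) (Or.inl rfl) hj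

lemma numSections_pos (hn : 0 < n) : 0 < numSections n m := by
  classical
  exact count_isSectionStart_pos n m hn

lemma sectionStart_le {i : ℕ} (hi : i ≤ numSections n m) : sectionStart n m i ≤ n := by
  simpa [sectionStart_numSections] using (sectionStart_strictMono n m).monotone hi

lemma sectionStart_lt {i : ℕ} (hi : i < numSections n m) : sectionStart n m i < n := by
  simpa [sectionStart_numSections] using sectionStart_strictMono n m hi

lemma apply_eq_of_mem_section {i j : ℕ} (hij : sectionStart n m i ≤ j)
    (hj : j < sectionStart n m (i + 1)) : m j = m (sectionStart n m i) := by
  induction j, hij using Nat.le_induction with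
  | base => rfl
  | succ j hij ih =>
    have hnot : ¬ IsSectionStart n m (j + 1) := fun h =>
      absurd (Nat.le_nth_of_lt_nth_succ hj h) (by unfold sectionStart at hij; omega)
    simp only [IsSectionStart, not_or, not_not, add_tsub_cancel_right] at hnot
    rw [hnot.2.2, ih (by omega)]

open Classical in
lemma image_sectionStart :
    (Ico 1 (numSections n m)).image (sectionStart n m) = {j ∈ Ico 1 n | IsSectionStart n m j} := by
  ext j
  simp only [mem_image, mem_filter, mem_Ico]
  constructor
  · rintro ⟨i, ⟨hi1, his⟩, rfl⟩
    refine ⟨⟨?_, sectionStart_lt n m his⟩, Nat.nth_mem_of_infinite (isSectionStart_infinite n m) i⟩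
    have := sectionStart_strictMono n m (show 0 < i by omega)
    rwa [sectionStart_zero] at this
  · rintro ⟨⟨hj1, hjn⟩, hj⟩
    refine ⟨Nat.count (IsSectionStart n m) j, ⟨?_, Nat.count_strict_mono hj hjn⟩, Nat.nth_count hj⟩
    exact count_isSectionStart_pos n m (by omega)

lemma sum_sections {M : Type*} [AddCommMonoid M] (f : α → α → M) (hf : ∀ a, f a a = 0) :
    ∑ i ∈ Ico 1 (numSections n m), f (m (sectionStart n m i)) (m (sectionStart n m (i - 1))) =
      ∑ j ∈ Ico 1 n, f (m j) (m (j - 1)) := by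
  classical
  have hprev : ∀ i ∈ Ico 1 (numSections n m),
      m (sectionStart n m i - 1) = m (sectionStart n m (i - 1)) := by
    intro i hi
    obtain ⟨i, rfl⟩ : ∃ i', i = i' + 1 := ⟨i - 1, by simp only [mem_Ico] at hi; omega⟩
    have := sectionStart_strictMono n m (Nat.lt_add_one i)
    rw [add_tsub_cancel_right]
    exact apply_eq_of_mem_section n m (by omega) (by omega)
  have hstay : ∀ j ∈ Ico 1 n, f (m j) (m (j - 1)) ≠ 0 → IsSectionStart n m j :=
    fun j _ hj => Or.inr (Or.inr fun heq => hj (by rw [heq, hf]))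
  rw [← sum_filter_of_ne hstay, ← image_sectionStart,
    sum_image (sectionStart_strictMono n m).injective.injOn]
  exact sum_congr rfl fun i hi => by rw [hprev i hi]

lemma numSections_le_sum (f : α → α → ℕ)
    (hf : ∀ j ∈ Ico 1 n, m j ≠ m (j - 1) → 1 ≤ f (m j) (m (j - 1))) :
    numSections n m ≤ ∑ j ∈ Ico 1 n, f (m j) (m (j - 1)) + 1 := by
  classical
  have hcard : numSections n m - 1 = #{j ∈ Ico 1 n | IsSectionStart n m j} := by
    rw [← image_sectionStart, card_image_of_injective _ (sectionStart_strictMono n m).injective,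
      Nat.card_Ico]
  have hle : #{j ∈ Ico 1 n | IsSectionStart n m j} ≤ ∑ j ∈ Ico 1 n, f (m j) (m (j - 1)) := by
    calc #{j ∈ Ico 1 n | IsSectionStart n m j}
        ≤ ∑ j ∈ Ico 1 n with IsSectionStart n m j, f (m j) (m (j - 1)) := by
          simpa using card_nsmul_le_sum {j ∈ Ico 1 n | IsSectionStart n m j}
            (fun j => f (m j) (m (j - 1))) 1 fun j hj => by
              simp only [mem_filter, mem_Ico] at hj
              obtain ⟨hjn, hj0 | hjn' | hne⟩ := hj <;> first | omega | exact hf j (mem_Ico.2 hjn) hne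
      _ ≤ _ := sum_le_sum_of_subset (filter_subset _ _)
  omega

end Sections

lemma List.flatMap_range_drop_take {β : Type*} (L : List β) {d : ℕ → ℕ} (hd : Monotone d)
    (hd0 : d 0 = 0) (s : ℕ) :
    (List.range s).flatMap (fun i => (L.take (d (i + 1))).drop (d i)) = L.take (d s) := by
  induction s with
  | zero => simp [hd0]
  | succ s ih =>
    rw [List.range_succ, List.flatMap_append, ih, List.flatMap_singleton]
    conv_rhs => rw [← List.take_append_drop (d s) (L.take (d (s + 1)))]
    rw [List.take_take, min_eq_left (hd s.le_succ)]

lemma List.exists_getElem_of_mem_drop_take {β : Type*} {L : List β} {a b : ℕ} {x : β}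
    (hx : x ∈ (L.take b).drop a) : ∃ j, ∃ h : j < L.length, a ≤ j ∧ j < b ∧ L[j] = x := by
  obtain ⟨j, hj, rfl⟩ := List.mem_drop_iff_getElem.1 hx
  simp only [List.length_take] at hj
  exact ⟨a + j, by omega, by omega, by omega, by simp⟩

lemma isAGCircuit_permCircuit_iff {V : Type*} {AG : SimpleGraph V} {σ : Equiv.Perm V}
    {C : Circuit V} : IsAGCircuit AG (permCircuit σ C) ↔ ∀ g ∈ C, GateExec AG σ g := by
  constructor
  · rintro h (_ | ⟨p, q⟩) hg
    · trivial
    · exact h _ _ (List.mem_map_of_mem (f := permGate σ) hg)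
  · intro h p q hpq
    obtain ⟨g, hg, hgpq⟩ := List.mem_map.1 hpq
    cases g with
    | one _ => cases hgpq
    | two a b =>
      obtain ⟨rfl, rfl⟩ := Gate.two.inj hgpq
      exact h _ hg

section SwapCost

variable {G : SimpleGraph V} {L : List (V × V)} {π : Equiv.Perm V}

lemma swapCost_le_length (h : ImplementedBy G L π) : swapCost G π ≤ L.length :=
  Nat.sInf_le ⟨L, rfl, h⟩

lemma exists_implementedBy_length_eq_swapCost (h : ImplementedBy G L π) :
    ∃ L', L'.length = swapCost G π ∧ ImplementedBy G L' π :=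
  Nat.sInf_mem (s := {n | ∃ L' : List (V × V), L'.length = n ∧ ImplementedBy G L' π})
    ⟨L.length, L, rfl, h⟩

lemma swapCost_one : swapCost G 1 = 0 :=
  Nat.eq_zero_of_le_zero (swapCost_le_length (show ImplementedBy G [] 1 from ⟨by simp, rfl⟩))

lemma one_le_swapCost (h : ImplementedBy G L π) (hπ : π ≠ 1) : 1 ≤ swapCost G π := by
  obtain ⟨L', hL', hL'π⟩ := exists_implementedBy_length_eq_swapCost h
  refine Nat.one_le_iff_ne_zero.2 fun h0 => hπ ?_
  rw [← hL'π.2, List.eq_nil_of_length_eq_zero (hL'.trans h0)]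
  rfl

end SwapCost

section Transformation

variable {AG : SimpleGraph V} {τ : Equiv.Perm V} {S : ℕ → List (V × V)}

lemma curMap_succ (j : ℕ) :
    curMap τ S (j + 1) =
      (((S (j + 1)).map fun p => Equiv.swap p.1 p.2).reverse).prod * curMap τ S j := by
  rw [curMap, curMap, List.range_succ, List.flatMap_append, List.map_append, List.reverse_append,
    List.prod_append, mul_assoc, List.flatMap_singleton]

lemma ExecutableWith.implementedBy_step {C : Circuit V} (hexec : ExecutableWith AG C τ S) {j : ℕ}
    (hj : j ∈ Ico 1 C.length) :
    ImplementedBy AG (S j) (curMap τ S j * (curMap τ S (j - 1))⁻¹) := by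
  obtain ⟨hj1, hjn⟩ := mem_Ico.1 hj
  obtain ⟨i, rfl⟩ : ∃ i, j = i + 1 := ⟨j - 1, by omega⟩
  exact ⟨hexec.1 _ hjn, by rw [add_tsub_cancel_right, curMap_succ, mul_inv_cancel_right]⟩

lemma curMap_eq_of_implementedBy {τ' : Equiv.Perm V} {S' : ℕ → List (V × V)}
    (h0 : curMap τ' S' 0 = curMap τ S 0) {j : ℕ}
    (h : ∀ i < j, ImplementedBy AG (S' (i + 1)) (curMap τ S (i + 1) * (curMap τ S i)⁻¹)) :
    curMap τ' S' j = curMap τ S j := by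
  induction j with
  | zero => exact h0
  | succ j ih =>
    rw [curMap_succ, (h j (Nat.lt_add_one j)).2, ih fun i hi => h i (by omega),
      inv_mul_cancel_right]

lemma ExecutableWith.exists_transSwapCount_eq_sum_swapCost {C : Circuit V}
    (hexec : ExecutableWith AG C τ S) :
    ∃ τ' S', ExecutableWith AG C τ' S' ∧ transSwapCount C S' =
      ∑ j ∈ Ico 1 C.length, swapCost AG (curMap τ S j * (curMap τ S (j - 1))⁻¹) := by
  have hopt : ∀ j ∈ Ico 1 C.length, ∃ L : List (V × V),
      L.length = swapCost AG (curMap τ S j * (curMap τ S (j - 1))⁻¹) ∧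
        ImplementedBy AG L (curMap τ S j * (curMap τ S (j - 1))⁻¹) :=
    fun j hj => exists_implementedBy_length_eq_swapCost (hexec.implementedBy_step hj)
  choose! L hL using hopt
  let S' : ℕ → List (V × V) := fun j => if j = 0 then [] else L j
  have hL' : ∀ i, i + 1 < C.length →
      ImplementedBy AG (S' (i + 1)) (curMap τ S (i + 1) * (curMap τ S i)⁻¹) := fun i hi => by
    simpa [S'] using (hL (i + 1) (by simp only [mem_Ico]; omega)).2
  have hcur : ∀ j < C.length, curMap (curMap τ S 0) S' j = curMap τ S j := fun j hj =>
    curMap_eq_of_implementedBy (by simp [curMap, S']) fun i hi => hL' i (by omega)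
  refine ⟨curMap τ S 0, S', ⟨fun j hj p hp => ?_, fun j hj => hcur j hj ▸ hexec.2 j hj⟩, ?_⟩
  · cases j with
    | zero => simp [S'] at hp
    | succ i => exact (hL' i hj).1 p hp
  · have hsub : Ico 1 C.length ⊆ range C.length := fun j hj => by
      simp only [mem_Ico, mem_range] at hj ⊢
      omega
    rw [transSwapCount, ← sum_subset hsub fun j hj hj' => by
      simp only [mem_Ico, mem_range] at hj hj'
      simp [S', show j = 0 by omega]]
    exact sum_congr rfl fun j hj => by
      simp [S', (hL j hj).1, show j ≠ 0 by simp only [mem_Ico] at hj; omega]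

lemma transSwapCount_eq_sum_swapCost_of_minimal {C : Circuit V}
    (hexec : ExecutableWith AG C τ S)
    (hmin : ∀ τ' S', ExecutableWith AG C τ' S' → transSwapCount C S ≤ transSwapCount C S') :
    transSwapCount C S =
      ∑ j ∈ Ico 1 C.length, swapCost AG (curMap τ S j * (curMap τ S (j - 1))⁻¹) := by
  obtain ⟨τ', S', hexec', hcount⟩ := hexec.exists_transSwapCount_eq_sum_swapCost
  refine le_antisymm (hcount ▸ hmin τ' S' hexec') ?_
  calc _ ≤ ∑ j ∈ Ico 1 C.length, (S j).length :=
        sum_le_sum fun j hj => swapCost_le_length (hexec.implementedBy_step hj)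
    _ ≤ transSwapCount C S :=
        sum_le_sum_of_subset fun j hj => by simp only [mem_Ico, mem_range] at hj ⊢; omega

end Transformation

theorem optimal_transformation_structure_general (AG : SimpleGraph V)
    (C : Circuit V) (hC : C ≠ [])
    (τ : Equiv.Perm V) (S : ℕ → List (V × V)) (k : ℕ)
    (hexec : ExecutableWith AG C τ S) (hk : transSwapCount C S = k)
    (hmin : ∀ (τ' : Equiv.Perm V) (S' : ℕ → List (V × V)),
      ExecutableWith AG C τ' S' → k ≤ transSwapCount C S') :
    ∃ s : ℕ, 1 ≤ s ∧ s ≤ k + 1 ∧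
      ∃ (Cs : ℕ → Circuit V) (σ : ℕ → Equiv.Perm V),
        (∀ i < s, Cs i ≠ []) ∧
        C = (List.range s).flatMap Cs ∧
        (∀ i < s, IsAGCircuit AG (permCircuit (σ i) (Cs i))) ∧
        ∑ i ∈ Finset.Ico 1 s, swapCost AG (σ i * (σ (i - 1))⁻¹) = k := by
  set n := C.length
  set m := curMap τ S
  have hk' : k = ∑ j ∈ Ico 1 n, swapCost AG (m j * (m (j - 1))⁻¹) :=
    hk ▸ transSwapCount_eq_sum_swapCost_of_minimal hexec (hk ▸ hmin)
  refine ⟨numSections n m, numSections_pos n m (List.length_pos_iff.2 hC), ?_,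
    fun i => (C.take (sectionStart n m (i + 1))).drop (sectionStart n m i),
    fun i => m (sectionStart n m i), fun i hi => ?_, ?_, fun i hi => ?_, ?_⟩
  · exact hk' ▸ numSections_le_sum n m (fun a b => swapCost AG (a * b⁻¹)) fun j hj hne =>
      one_le_swapCost (hexec.implementedBy_step hj) (mul_inv_eq_one.not.2 hne)
  · have := sectionStart_strictMono n m (show i < i + 1 by omega)
    have := sectionStart_le n m (show i + 1 ≤ numSections n m by omega)
    rw [← List.length_pos_iff, List.length_drop, List.length_take]
    omega
  · rw [List.flatMap_range_drop_take C (sectionStart_strictMono n m).monotone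
      (sectionStart_zero n m), sectionStart_numSections, List.take_length]
  · refine isAGCircuit_permCircuit_iff.2 fun g hg => ?_
    obtain ⟨j, hj, h1, h2, rfl⟩ := List.exists_getElem_of_mem_drop_take hg
    have hgate : GateExec AG (m j) C[j] := hexec.2 j hj
    rwa [apply_eq_of_mem_section n m h1 h2] at hgate
  · rw [hk', sum_sections n m (fun a b => swapCost AG (a * b⁻¹)) fun a => by
      rw [mul_inv_cancel, swapCost_one]]

theorem optimal_transformation_structure [Fintype V] (AG : SimpleGraph V)
    (hAG : AG.Connected) (C : Circuit V) (hC : C ≠ [])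
    (τ : Equiv.Perm V) (S : ℕ → List (V × V)) (k : ℕ)
    (hexec : ExecutableWith AG C τ S) (hk : transSwapCount C S = k)
    (hmin : ∀ (τ' : Equiv.Perm V) (S' : ℕ → List (V × V)),
      ExecutableWith AG C τ' S' → k ≤ transSwapCount C S') :
    ∃ s : ℕ, 1 ≤ s ∧ s ≤ k + 1 ∧
      ∃ (Cs : ℕ → Circuit V) (σ : ℕ → Equiv.Perm V),
        (∀ i < s, Cs i ≠ []) ∧
        C = (List.range s).flatMap Cs ∧
        (∀ i < s, IsAGCircuit AG (permCircuit (σ i) (Cs i))) ∧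
        ∑ i ∈ Finset.Ico 1 s, swapCost AG (σ i * (σ (i - 1))⁻¹) = k :=
  optimal_transformation_structure_general AG C hC τ S k hexec hk hmin
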